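/- There exist constants c > 0 and ỹ > 0 such that for every real y > ỹ, |∫_{−∞}^{∞} |φ_x(iy) − iy|² dx − π/(4y)| < c/y³. -/

import Mathlib

noncomputable def upperSqrt (w : ℂ) : ℂ :=
  if 0 < (w ^ (1/2 : ℂ)).im then w ^ (1/2 : ℂ) else -(w ^ (1/2 : ℂ))

noncomputable def slitMap (x : ℝ) (z : ℂ) : ℂ :=
  (x : ℂ) + upperSqrt ((z - (x : ℂ)) ^ 2 - 1)

open MeasureTheory

/-! Write `w = iy - x` and `s = upperSqrt (w² - 1)`, so that the displacement is `s - w` and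
`(s - w)(s + w) = -1`. Since `Im s ≥ 0`, `‖s + w‖ ≥ y`; hence `‖s - w‖ = ‖s + w‖⁻¹` is small and
`2‖w‖ = ‖(s + w) - (s - w)‖` is within `‖s + w‖⁻¹` of `‖s + w‖`. This yields the pointwise estimate
`‖s - w‖² = 1 / (4(x² + y²)) + O(1 / (y²(x² + y²)))`, which integrates, via
`∫ dx / (x² + y²) = π / y`, to the claim with `c = 2π` and `ỹ = 1`. -/

theorem upperSqrt_sq (w : ℂ) : upperSqrt w ^ 2 = w := by
  unfold upperSqrt
  split_ifs <;> simp

theorem im_upperSqrt_nonneg (w : ℂ) : 0 ≤ (upperSqrt w).im := by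
  unfold upperSqrt
  split_ifs with h
  · exact h.le
  · simpa using h

@[fun_prop]
theorem measurable_upperSqrt : Measurable upperSqrt := by
  have h : Measurable fun w : ℂ => w ^ (1/2 : ℂ) := measurable_id.pow_const _
  exact Measurable.ite (measurableSet_lt measurable_const (Complex.measurable_im.comp h)) h h.neg

@[fun_prop]
theorem measurable_slitMap_apply (z : ℂ) : Measurable fun x => slitMap x z := by
  unfold slitMap
  fun_prop

theorem integrable_inv_sq_add_sq {a : ℝ} (ha : a ≠ 0) :
    Integrable fun x : ℝ => (x ^ 2 + a ^ 2)⁻¹ := by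
  convert (integrable_inv_one_add_sq.comp_div ha).const_mul (a ^ 2)⁻¹ using 2 with x
  field_simp
  ring

theorem integral_univ_inv_sq_add_sq {a : ℝ} (ha : a ≠ 0) :
    ∫ x : ℝ, (x ^ 2 + a ^ 2)⁻¹ = Real.pi / |a| := by
  have h : (fun x : ℝ => (x ^ 2 + a ^ 2)⁻¹) = fun x => (a ^ 2)⁻¹ * (1 + (x / a) ^ 2)⁻¹ := by
    funext x; field_simp; ring
  rw [h, integral_const_mul, Measure.integral_comp_div (fun u : ℝ => (1 + u ^ 2)⁻¹),
    integral_univ_inv_one_add_sq, smul_eq_mul, ← sq_abs a]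
  field_simp

theorem abs_integral_sub_integral_le {α : Type*} [MeasurableSpace α] {μ : Measure α}
    {f g h : α → ℝ} (hf : AEStronglyMeasurable f μ) (hg : Integrable g μ) (hh : Integrable h μ)
    (hfg : ∀ x, |f x - g x| ≤ h x) :
    |∫ x, f x ∂μ - ∫ x, g x ∂μ| ≤ ∫ x, h x ∂μ := by
  have hfg' : ∀ᵐ x ∂μ, ‖f x - g x‖ ≤ h x := .of_forall hfg
  have hf' : Integrable f μ := by
    simpa using (hh.mono' (hf.sub hg.1) hfg').add hg
  rw [← integral_sub hf' hg]
  exact norm_integral_le_of_norm_le hh hfg'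

theorem abs_inv_sq_sub_inv_four_mul_sq_le {y t W : ℝ} (hy : 1 < y) (hyt : y ≤ t)
    (hW : |2 * W - t| ≤ t⁻¹) :
    |(t ^ 2)⁻¹ - (4 * W ^ 2)⁻¹| ≤ (y ^ 2)⁻¹ * (W ^ 2)⁻¹ := by
  have ht : 1 < t := hy.trans_le hyt
  have htinv : t⁻¹ < 1 := inv_lt_one_of_one_lt₀ ht
  obtain ⟨hlo, hhi⟩ := abs_le.mp hW
  have hW0 : 0 < W := by linarith
  have hsum : 0 < 2 * W + t := by linarith
  have hkey : (t ^ 2)⁻¹ - (4 * W ^ 2)⁻¹ = (2 * W - t) * (2 * W + t) / (4 * W ^ 2 * t ^ 2) := by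
    field_simp
    ring
  calc |(t ^ 2)⁻¹ - (4 * W ^ 2)⁻¹| = |2 * W - t| * (2 * W + t) / (4 * W ^ 2 * t ^ 2) := by
        rw [hkey, abs_div, abs_of_pos (by positivity : (0 : ℝ) < 4 * W ^ 2 * t ^ 2), abs_mul,
          abs_of_pos hsum]
    _ ≤ t⁻¹ * (2 * t + t⁻¹) / (4 * W ^ 2 * t ^ 2) := by gcongr ?_ * ?_ / _; linarith
    _ = (2 + t⁻¹ ^ 2) / 4 * (t ^ 2)⁻¹ * (W ^ 2)⁻¹ := by field_simp
    _ ≤ 1 * (y ^ 2)⁻¹ * (W ^ 2)⁻¹ := by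
        gcongr
        nlinarith
    _ = (y ^ 2)⁻¹ * (W ^ 2)⁻¹ := by rw [one_mul]

theorem abs_norm_sub_sq_sub_le {s w : ℂ} {y : ℝ} (hs : s ^ 2 = w ^ 2 - 1) (hy : 1 < y)
    (hyt : y ≤ ‖s + w‖) :
    |‖s - w‖ ^ 2 - (4 * ‖w‖ ^ 2)⁻¹| ≤ (y ^ 2)⁻¹ * (‖w‖ ^ 2)⁻¹ := by
  have hprod : (s - w) * (s + w) = -1 := by linear_combination hs
  have hnorm : ‖s - w‖ = ‖s + w‖⁻¹ :=
    eq_inv_of_mul_eq_one_left (by rw [← norm_mul, hprod, norm_neg, norm_one])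
  have htwo : |2 * ‖w‖ - ‖s + w‖| ≤ ‖s + w‖⁻¹ := by
    have h := abs_norm_sub_norm_le (2 * w) (s + w)
    rwa [norm_mul, Complex.norm_two, show 2 * w - (s + w) = -(s - w) by ring, norm_neg,
      hnorm] at h
  rw [hnorm, inv_pow]
  exact abs_inv_sq_sub_inv_four_mul_sq_le hy hyt htwo

theorem abs_norm_slitMap_sub_sq_sub_le (x : ℝ) {y : ℝ} (hy : 1 < y) :
    |‖slitMap x (Complex.I * y) - Complex.I * y‖ ^ 2 - 4⁻¹ * (x ^ 2 + y ^ 2)⁻¹|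
      ≤ (y ^ 2)⁻¹ * (x ^ 2 + y ^ 2)⁻¹ := by
  set w : ℂ := Complex.I * y - x
  have hw_norm : ‖w‖ ^ 2 = x ^ 2 + y ^ 2 := by
    rw [Complex.sq_norm, Complex.normSq_apply]
    simp [w]
    ring
  have hsub : slitMap x (Complex.I * y) - Complex.I * y = upperSqrt (w ^ 2 - 1) - w := by
    simp only [slitMap, w]
    ring
  have hyt : y ≤ ‖upperSqrt (w ^ 2 - 1) + w‖ :=
    calc y ≤ (upperSqrt (w ^ 2 - 1) + w).im := by
          simpa [w] using im_upperSqrt_nonneg (w ^ 2 - 1)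
      _ ≤ _ := Complex.im_le_norm _
  rw [hsub, ← hw_norm, ← mul_inv]
  exact abs_norm_sub_sq_sub_le (upperSqrt_sq _) hy hyt

theorem slitMap_integral_asymptotics :
    ∃ c > (0 : ℝ), ∃ ytil > (0 : ℝ), ∀ y : ℝ, ytil < y →
      |(∫ x : ℝ, ‖slitMap x (Complex.I * y) - Complex.I * y‖ ^ 2)
        - Real.pi / (4 * y)| < c / y ^ 3 := by
  refine ⟨2 * Real.pi, by positivity, 1, one_pos, fun y hy => ?_⟩
  have hy0 : 0 < y := one_pos.trans hy
  have hg := integrable_inv_sq_add_sq hy0.ne'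
  have hle := abs_integral_sub_integral_le (by fun_prop) (hg.const_mul 4⁻¹)
    (hg.const_mul (y ^ 2)⁻¹) fun x => abs_norm_slitMap_sub_sq_sub_le x hy
  rw [integral_const_mul, integral_const_mul, integral_univ_inv_sq_add_sq hy0.ne',
    abs_of_pos hy0] at hle
  calc _ = |(∫ x : ℝ, ‖slitMap x (Complex.I * y) - Complex.I * y‖ ^ 2)
        - 4⁻¹ * (Real.pi / y)| := by ring_nf
    _ ≤ (y ^ 2)⁻¹ * (Real.pi / y) := hle
    _ = Real.pi / y ^ 3 := by field_simp
    _ < 2 * Real.pi / y ^ 3 := by gcongr; linarith [Real.pi_pos]
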